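/- arXiv:2212.08719 — 2 statements merged into one kernel-verified Lean document; each statement's English description precedes it below -/
import Mathlib

section
/- Let S be a set of permutations of the positive integers that is closed under composition and contains the identity, acting on 𝔅 via σ ↦ f_σ. Then the action of S on 𝔅 is distal if and only if it admits a finite pseudo-co-decomposition (𝔅,(S_i : 1 ≤ i ≤ n)) into distal transformation semigroups, i.e. subsemigroups S_1,…,S_n of S, each containing the identity, whose union generates S, such that for all indices i_1,…,i_k ∈ {1,…,n}, every x ∈ 𝔅 and every permutation m of {1,…,k} the orbit sets satisfy x S_{i_1}⋯S_{i_k} = x S_{i_{m_1}}⋯S_{i_{m_k}}, and such that each action of S_i on 𝔅 is distal. -/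
open Pointwise Classical

/-- 𝔅 = {0} ∪ {1/n : n a positive integer} as a subspace of ℝ. -/
def Bset : Set ℝ := {x | x = 0 ∨ ∃ n : ℕ+, x = 1 / ((n : ℕ) : ℝ)}

/-- The homeomorphism `f_σ` of `𝔅` induced by a permutation `σ` of the positive
integers: `(1/k) f_σ = 1/σ(k)` and `0 f_σ = 0`. -/
noncomputable def fPerm (σ : Equiv.Perm ℕ+) (x : Bset) : Bset :=
  if h : ∃ n : ℕ+, (x : ℝ) = 1 / ((n : ℕ) : ℝ) then
    ⟨1 / (((σ h.choose : ℕ+) : ℕ) : ℝ), Or.inr ⟨σ h.choose, rfl⟩⟩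
  else ⟨0, Or.inl rfl⟩

/-- The pair `(x, y)` is proximal for the set `S` of self-maps of `X`. -/
def IsProximal {X : Type*} [TopologicalSpace X] (S : Set (X → X)) (x y : X) : Prop :=
  ∃ z : X, (z, z) ∈ closure {p : X × X | ∃ f ∈ S, p = (f x, f y)}

/-- The action of the set `S` of self-maps of `X` is distal. -/
def IsDistalAction {X : Type*} [TopologicalSpace X] (S : Set (X → X)) : Prop :=
  ∀ x y : X, IsProximal S x y → x = y

/-- The set of self-maps of `𝔅` induced by a set of permutations. -/
noncomputable def permAct (S : Set (Equiv.Perm ℕ+)) : Set (Bset → Bset) :=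
  {f | ∃ σ ∈ S, f = fPerm σ}

/-- The orbit `xS` of a point of `𝔅`. -/
def pointOrbit (x : Bset) (S : Set (Equiv.Perm ℕ+)) : Set Bset :=
  {y | ∃ σ ∈ S, y = fPerm σ x}

/-- `P S = {x σ : x ∈ P, σ ∈ S}`, the action of a set of permutations on a set of points. -/
def actSet (P : Set Bset) (S : Set (Equiv.Perm ℕ+)) : Set Bset :=
  {y | ∃ x ∈ P, ∃ σ ∈ S, y = fPerm σ x}

/-- `T_n`: permutations fixing every `k > n`. -/
def TnSet (n : ℕ+) : Set (Equiv.Perm ℕ+) := {σ | ∀ k : ℕ+, n < k → σ k = k}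

/-- `T`: the finitary permutations of the positive integers. -/
def Tfin : Set (Equiv.Perm ℕ+) := {σ | ∃ n : ℕ+, ∀ k : ℕ+, n < k → σ k = k}

noncomputable def onePt : Bset := ⟨1, Or.inr ⟨1, by norm_num⟩⟩
def zeroPt : Bset := ⟨0, Or.inl rfl⟩

/-! For these actions distality amounts to finiteness of all orbits: an infinite orbit of `x`
accumulates at the common fixed point `0`, which makes `(0, x)` proximal, while for finite orbits the
closure in the definition of proximality is a finite set of pairs `(xσ, yσ)` and each `f_σ` is
injective. Given a pseudo-co-decomposition, every `S_i` has finite orbits, and the permutation rule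
together with `S_i S_i = S_i` absorbs any word `x S_{i_1} ⋯ S_{i_k}` into the finite set
`x S_1 ⋯ S_n`, which therefore contains the orbit `xS`. Conversely `S` itself is a
pseudo-co-decomposition with `n = 1`. -/

noncomputable def mkPt (k : ℕ+) : Bset := ⟨1 / ((k : ℕ) : ℝ), Or.inr ⟨k, rfl⟩⟩

lemma mkPt_injective : Function.Injective mkPt := by
  intro a b h
  have h' : (1 : ℝ) / ((a : ℕ) : ℝ) = 1 / ((b : ℕ) : ℝ) := congrArg Subtype.val h
  rw [one_div, one_div, inv_inj] at h'
  exact PNat.coe_injective (by exact_mod_cast h')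

lemma mkPt_ne_zeroPt (k : ℕ+) : mkPt k ≠ zeroPt := by
  intro h
  have h' : (1 : ℝ) / ((k : ℕ) : ℝ) = 0 := congrArg Subtype.val h
  exact absurd h' (by positivity)

lemma eq_zeroPt_or_eq_mkPt (x : Bset) : x = zeroPt ∨ ∃ k, x = mkPt k := by
  obtain ⟨x, hx | ⟨k, rfl⟩⟩ := x
  · exact Or.inl (Subtype.ext hx)
  · exact Or.inr ⟨k, rfl⟩

lemma fPerm_mkPt (σ : Equiv.Perm ℕ+) (k : ℕ+) : fPerm σ (mkPt k) = mkPt (σ k) := by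
  have h : ∃ n : ℕ+, ((mkPt k : Bset) : ℝ) = 1 / ((n : ℕ) : ℝ) := ⟨k, rfl⟩
  have hk : h.choose = k := mkPt_injective (Subtype.ext h.choose_spec.symm)
  rw [fPerm, dif_pos h]
  simp only [hk]
  rfl

lemma fPerm_zeroPt (σ : Equiv.Perm ℕ+) : fPerm σ zeroPt = zeroPt := by
  have h : ¬ ∃ n : ℕ+, ((zeroPt : Bset) : ℝ) = 1 / ((n : ℕ) : ℝ) := by
    rintro ⟨n, hn⟩
    exact mkPt_ne_zeroPt n (Subtype.ext hn.symm)
  rw [fPerm, dif_neg h]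
  rfl

lemma fPerm_one (x : Bset) : fPerm 1 x = x := by
  rcases eq_zeroPt_or_eq_mkPt x with rfl | ⟨k, rfl⟩
  · exact fPerm_zeroPt 1
  · exact fPerm_mkPt 1 k

lemma fPerm_mul (σ τ : Equiv.Perm ℕ+) (x : Bset) :
    fPerm (σ * τ) x = fPerm σ (fPerm τ x) := by
  rcases eq_zeroPt_or_eq_mkPt x with rfl | ⟨k, rfl⟩
  · simp only [fPerm_zeroPt]
  · simp only [fPerm_mkPt, Equiv.Perm.mul_apply]

lemma fPerm_injective (σ : Equiv.Perm ℕ+) : Function.Injective (fPerm σ) := by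
  intro x y h
  simpa only [← fPerm_mul, inv_mul_cancel, fPerm_one] using congrArg (fPerm σ⁻¹) h

lemma dist_zeroPt_mkPt (k : ℕ+) : dist zeroPt (mkPt k) = 1 / ((k : ℕ) : ℝ) := by
  rw [Subtype.dist_eq, Real.dist_eq]
  simp [zeroPt, mkPt]

lemma zeroPt_mem_closure_of_infinite {T : Set Bset} (hT : T.Infinite) : zeroPt ∈ closure T := by
  have hK : (mkPt ⁻¹' T).Infinite := by
    intro hfin
    refine hT ((Set.finite_singleton zeroPt).union (hfin.image mkPt) |>.subset ?_)
    intro x hx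
    rcases eq_zeroPt_or_eq_mkPt x with rfl | ⟨k, rfl⟩
    · exact Or.inl rfl
    · exact Or.inr ⟨k, hx, rfl⟩
  refine Metric.mem_closure_iff.2 fun ε hε => ?_
  obtain ⟨N, hN⟩ := exists_nat_gt (1 / ε)
  obtain ⟨k, hkT, hNk⟩ := hK.exists_gt N.succPNat
  refine ⟨mkPt k, hkT, ?_⟩
  have hNk' : (N : ℝ) < ((k : ℕ) : ℝ) := by
    have : N < (k : ℕ) := lt_of_lt_of_le N.lt_succ_self (PNat.coe_le_coe _ _ |>.2 hNk.le)
    exact_mod_cast this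
  rw [dist_zeroPt_mkPt, div_lt_iff₀ (by positivity)]
  rw [div_lt_iff₀ hε] at hN
  nlinarith

lemma pointOrbit_zeroPt_subset (S : Set (Equiv.Perm ℕ+)) : pointOrbit zeroPt S ⊆ {zeroPt} := by
  rintro y ⟨σ, -, rfl⟩
  exact fPerm_zeroPt σ

lemma isProximal_zeroPt_of_infinite_pointOrbit {S : Set (Equiv.Perm ℕ+)} {x : Bset}
    (hx : (pointOrbit x S).Infinite) : IsProximal (permAct S) zeroPt x := by
  refine ⟨zeroPt, map_mem_closure (Continuous.prodMk_right zeroPt)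
    (zeroPt_mem_closure_of_infinite hx) ?_⟩
  rintro y ⟨σ, hσ, rfl⟩
  exact ⟨fPerm σ, ⟨σ, hσ, rfl⟩, by rw [fPerm_zeroPt]⟩

lemma isDistalAction_permAct_of_finite_pointOrbit {S : Set (Equiv.Perm ℕ+)}
    (hfin : ∀ x, (pointOrbit x S).Finite) : IsDistalAction (permAct S) := by
  rintro x y ⟨z, hz⟩
  have hpairs : {p : Bset × Bset | ∃ f ∈ permAct S, p = (f x, f y)}.Finite := by
    refine ((hfin x).prod (hfin y)).subset ?_
    rintro p ⟨f, ⟨σ, hσ, rfl⟩, rfl⟩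
    exact ⟨⟨σ, hσ, rfl⟩, ⟨σ, hσ, rfl⟩⟩
  rw [hpairs.isClosed.closure_eq] at hz
  obtain ⟨f, ⟨σ, -, rfl⟩, hp⟩ := hz
  exact fPerm_injective σ ((Prod.ext_iff.1 hp).1.symm.trans (Prod.ext_iff.1 hp).2)

lemma isDistalAction_permAct_iff_finite_pointOrbit {S : Set (Equiv.Perm ℕ+)} :
    IsDistalAction (permAct S) ↔ ∀ x, (pointOrbit x S).Finite := by
  refine ⟨fun hd x => ?_, isDistalAction_permAct_of_finite_pointOrbit⟩
  by_contra hx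
  obtain rfl := hd _ _ (isProximal_zeroPt_of_infinite_pointOrbit hx)
  exact hx ((Set.finite_singleton zeroPt).subset (pointOrbit_zeroPt_subset S))

lemma actSet_mono {P Q : Set Bset} (S : Set (Equiv.Perm ℕ+)) (h : P ⊆ Q) :
    actSet P S ⊆ actSet Q S := by
  rintro y ⟨x, hx, σ, hσ, rfl⟩
  exact ⟨x, h hx, σ, hσ, rfl⟩

lemma subset_actSet (P : Set Bset) {S : Set (Equiv.Perm ℕ+)} (h1 : 1 ∈ S) :
    P ⊆ actSet P S :=
  fun x hx => ⟨x, hx, 1, h1, (fPerm_one x).symm⟩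

lemma actSet_actSet (P : Set Bset) {S : Set (Equiv.Perm ℕ+)} (h1 : 1 ∈ S)
    (hmul : ∀ σ ∈ S, ∀ τ ∈ S, σ * τ ∈ S) :
    actSet (actSet P S) S = actSet P S := by
  refine (Set.Subset.antisymm ?_ (subset_actSet _ h1))
  rintro y ⟨x, ⟨w, hw, τ, hτ, rfl⟩, σ, hσ, rfl⟩
  exact ⟨w, hw, σ * τ, hmul σ hσ τ hτ, (fPerm_mul σ τ w).symm⟩

lemma actSet_finite {P : Set Bset} {S : Set (Equiv.Perm ℕ+)} (hP : P.Finite)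
    (hS : ∀ x, (pointOrbit x S).Finite) : (actSet P S).Finite := by
  refine (hP.biUnion fun x _ => hS x).subset ?_
  rintro y ⟨x, hx, σ, hσ, rfl⟩
  exact Set.mem_biUnion hx ⟨σ, hσ, rfl⟩

lemma foldl_actSet_mono (l : List (Set (Equiv.Perm ℕ+))) {P Q : Set Bset} (h : P ⊆ Q) :
    l.foldl actSet P ⊆ l.foldl actSet Q := by
  induction l generalizing P Q with
  | nil => exact h
  | cons S l ih => exact ih (actSet_mono S h)

lemma subset_foldl_actSet (l : List (Set (Equiv.Perm ℕ+))) (h1 : ∀ S ∈ l, 1 ∈ S)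
    (P : Set Bset) : P ⊆ l.foldl actSet P := by
  induction l generalizing P with
  | nil => exact subset_rfl
  | cons S l ih =>
    exact (subset_actSet P (h1 S List.mem_cons_self)).trans
      (ih (fun T hT => h1 T (List.mem_cons_of_mem S hT)) _)

lemma foldl_actSet_finite (l : List (Set (Equiv.Perm ℕ+)))
    (hl : ∀ S ∈ l, ∀ x, (pointOrbit x S).Finite) {P : Set Bset} (hP : P.Finite) :
    (l.foldl actSet P).Finite := by
  induction l generalizing P with
  | nil => exact hP
  | cons S l ih =>
    exact ih (fun T hT => hl T (List.mem_cons_of_mem S hT))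
      (actSet_finite hP (hl S List.mem_cons_self))

section PseudoCoDecomposition

variable {ι : Type*} (Ssub : ι → Set (Equiv.Perm ℕ+))

lemma foldl_actSet_append_absorb (h1 : ∀ i, 1 ∈ Ssub i)
    (hmul : ∀ i, ∀ σ ∈ Ssub i, ∀ τ ∈ Ssub i, σ * τ ∈ Ssub i)
    (hperm : ∀ l l' : List ι, l.Perm l' → ∀ x : Bset,
      (l.map Ssub).foldl actSet {x} = (l'.map Ssub).foldl actSet {x})
    [DecidableEq ι] {L : List ι} (hL : ∀ i, i ∈ L) (x : Bset) (l : List ι) :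
    ((L ++ l).map Ssub).foldl actSet {x} = (L.map Ssub).foldl actSet {x} := by
  induction l with
  | nil => rw [List.append_nil]
  | cons i l ih =>
    -- move `i` next to its copy in `L`, where the two factors `Ssub i` merge
    have hperm₁ : (L ++ i :: l).Perm (i :: i :: (L.erase i ++ l)) :=
      List.perm_middle.trans ((List.perm_cons_erase (hL i)).append_right l |>.cons i)
    have hperm₂ : (i :: (L.erase i ++ l)).Perm (L ++ l) :=
      ((List.perm_cons_erase (hL i)).append_right l).symm
    rw [hperm _ _ hperm₁, ← ih, ← hperm _ _ hperm₂]
    simp only [List.map_cons, List.foldl_cons, actSet_actSet _ (h1 i) (hmul i)]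

lemma fPerm_mem_foldl_actSet_of_mem_closure (h1 : ∀ i, 1 ∈ Ssub i)
    (hmul : ∀ i, ∀ σ ∈ Ssub i, ∀ τ ∈ Ssub i, σ * τ ∈ Ssub i)
    (hperm : ∀ l l' : List ι, l.Perm l' → ∀ x : Bset,
      (l.map Ssub).foldl actSet {x} = (l'.map Ssub).foldl actSet {x})
    [DecidableEq ι] {L : List ι} (hL : ∀ i, i ∈ L)
    {σ : Equiv.Perm ℕ+} (hσ : σ ∈ Subsemigroup.closure (⋃ i, Ssub i)) (x : Bset) :
    fPerm σ x ∈ (L.map Ssub).foldl actSet {x} := by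
  have hL1 : ∀ S ∈ L.map Ssub, 1 ∈ S := by
    simp only [List.mem_map]
    rintro _ ⟨i, -, rfl⟩
    exact h1 i
  have habsorb := foldl_actSet_append_absorb Ssub h1 hmul hperm hL
  induction hσ using Subsemigroup.closure_induction generalizing x with
  | mem σ hσ =>
    obtain ⟨_, ⟨i, rfl⟩, hi⟩ := hσ
    -- `x ∈ x S_L`, so `x σ ∈ x S_L S_i = x S_L`
    rw [← habsorb x [i], List.map_append, List.foldl_append]
    exact foldl_actSet_mono [Ssub i] (subset_foldl_actSet _ hL1 {x}) ⟨x, rfl, σ, hi, rfl⟩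
  | mul σ τ _ _ ihσ ihτ =>
    rw [← habsorb x L, List.map_append, List.foldl_append, fPerm_mul]
    exact foldl_actSet_mono _ (Set.singleton_subset_iff.2 (ihτ x)) (ihσ (fPerm τ x))

end PseudoCoDecomposition

/-- For a set `S` of permutations of the positive integers closed under
composition and containing the identity, acting on `𝔅` via `σ ↦ f_σ`: the action is distal
iff it admits a finite pseudo-co-decomposition `(𝔅,(S_i : 1 ≤ i ≤ n))` into distal
transformation semigroups. -/
theorem stmt2 (S : Set (Equiv.Perm ℕ+)) (hid : 1 ∈ S)
    (hmul : ∀ σ ∈ S, ∀ τ ∈ S, σ * τ ∈ S) :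
    IsDistalAction (permAct S) ↔
      ∃ (n : ℕ) (Ssub : Fin n → Set (Equiv.Perm ℕ+)), 0 < n ∧
        (∀ i, Ssub i ⊆ S) ∧
        (∀ i, 1 ∈ Ssub i) ∧
        (∀ i, ∀ σ ∈ Ssub i, ∀ τ ∈ Ssub i, σ * τ ∈ Ssub i) ∧
        (Subsemigroup.closure (⋃ i, Ssub i) : Set (Equiv.Perm ℕ+)) = S ∧
        (∀ l l' : List (Fin n), l.Perm l' → ∀ x : Bset,
          (l.map Ssub).foldl actSet {x} = (l'.map Ssub).foldl actSet {x}) ∧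
        (∀ i, IsDistalAction (permAct (Ssub i))) := by
  constructor
  · intro hS
    refine ⟨1, fun _ => S, one_pos, fun _ => subset_rfl, fun _ => hid, fun _ => hmul, ?_,
      fun l l' hl x => ?_, fun _ => hS⟩
    · rw [Set.iUnion_const]
      exact congrArg SetLike.coe
        (Subsemigroup.closure_eq (⟨S, fun ha hb => hmul _ ha _ hb⟩ : Subsemigroup _))
    · rw [List.map_const', List.map_const', hl.length_eq]
  · rintro ⟨n, Ssub, -, -, h1, hmulS, hcl, hperm, hdist⟩
    refine isDistalAction_permAct_iff_finite_pointOrbit.2 fun x => ?_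
    have hfinite := foldl_actSet_finite ((List.finRange n).map Ssub)
      (by simpa using fun i => isDistalAction_permAct_iff_finite_pointOrbit.1 (hdist i))
      (Set.finite_singleton x)
    refine hfinite.subset ?_
    rintro _ ⟨σ, hσ, rfl⟩
    rw [← hcl] at hσ
    exact fPerm_mem_foldl_actSet_of_mem_closure Ssub h1 hmulS hperm List.mem_finRange hσ x
end

section
/- (𝕊¹,Σ*) is not co-decomposable to non-point-transitive (equivalently, non-minimal) transformation semigroups: for every family (H_α)_{α∈Γ} of subsemigroups of Σ*, each containing the identity, whose union generates Σ* and which satisfies the multi condition (for distinct α_1,…,α_n, elements h_j ∈ H_{α_j}, every z ∈ 𝕊¹ and every permutation m of {1,…,n}, z h_1⋯h_n = z h_{m_1}⋯h_{m_n}), there exists α ∈ Γ such that H_α is infinite and the action (𝕊¹,H_α) is minimal (in particular point transitive). -/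
open Real

/-- Rotation of the unit circle by angle `α` : `e^{iθ} ↦ e^{i(α+θ)}`. -/
noncomputable def rotMap (α : ℝ) : Circle → Circle := fun z => Circle.exp α * z

/-- The conjugation map `η : e^{iθ} ↦ e^{-iθ}` of the unit circle. -/
noncomputable def conjMap : Circle → Circle := fun z => z⁻¹

/-- `ε_α = η φ_α : e^{iθ} ↦ e^{i(α-θ)}` (apply `η`, then the rotation `φ_α`). -/
noncomputable def reflMap (α : ℝ) : Circle → Circle := rotMap α ∘ conjMap

/-- `Σ* = {φ_α : α ∈ 2πℚ} ∪ {ε_α : α ∈ 2πℚ}`, the group generated by `η` together with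
the rotations by rational multiples of `2π`. -/
noncomputable def SigmaStar : Set (Circle → Circle) :=
  {f | (∃ q : ℚ, f = rotMap (2 * π * q)) ∨ (∃ q : ℚ, f = reflMap (2 * π * q))}

/-- The orbit `z A` of a point of the circle under a set of self-maps. -/
def circOrbit (z : Circle) (A : Set (Circle → Circle)) : Set Circle := {w | ∃ f ∈ A, w = f z}

/-- `P A = {z f : z ∈ P, f ∈ A}`. -/
def circActSet (P : Set Circle) (A : Set (Circle → Circle)) : Set Circle :=
  {w | ∃ z ∈ P, ∃ f ∈ A, w = f z}

/-- Left-to-right setwise product `A B = {f g : f ∈ A, g ∈ B}` (apply `f`, then `g`). -/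
def compSet (A B : Set (Circle → Circle)) : Set (Circle → Circle) :=
  {h | ∃ f ∈ A, ∃ g ∈ B, h = g ∘ f}

/-!
Some `H_α₀` contains a reflection `ε_c`, because products of rotations are rotations. By the multi
condition every `H_β` with `β ≠ α₀` commutes elementwise with `H_α₀`, so every `f ∈ Σ*` factors
as `f = h k` with `h ∈ H_α₀` and `k` a rotation or reflection commuting with `H_α₀`. Commuting
with `ε_c` forces `k² = id`, hence `f² = h² ∈ H_α₀`. Every rotation by an angle in `2πℚ` is such a
square, so every orbit of `H_α₀` is dense, and `H_α₀` is infinite.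
-/

section
variable {X Γ : Type*}

lemma foldl_comp_mem {G S : Set (X → X)} (hGS : ∀ g ∈ G, ∀ f ∈ S, g ∘ f ∈ S)
    {l : List (X → X)} (hl : ∀ g ∈ l, g ∈ G) {f : X → X} (hf : f ∈ S) :
    l.foldl (fun acc g => g ∘ acc) f ∈ S := by
  induction l generalizing f with
  | nil => exact hf
  | cons g l ih =>
    exact ih (fun g' hg' => hl g' (List.mem_cons_of_mem _ hg'))
      (hGS g (hl g List.mem_cons_self) f hf)

lemma comp_comm_of_multi {H : Γ → Set (X → X)}
    (hmulti : ∀ l l' : List (Γ × (X → X)), (l.map Prod.fst).Nodup →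
      (∀ p ∈ l, p.2 ∈ H p.1) → l.Perm l' → ∀ z : X,
      (l.map Prod.snd).foldl (fun w f => f w) z = (l'.map Prod.snd).foldl (fun w f => f w) z)
    {α β : Γ} (hβ : β ≠ α) {g h : X → X} (hg : g ∈ H β) (hh : h ∈ H α) : g ∘ h = h ∘ g := by
  funext z
  simpa using hmulti [(α, h), (β, g)] [(β, g), (α, h)] (by simpa using hβ.symm)
    (by simp [hh, hg]) (List.Perm.swap _ _ _) z

lemma exists_foldl_eq_comp {H : Γ → Set (X → X)} {α₀ : Γ} {K : Set (X → X)}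
    (hid : id ∈ H α₀) (hclosed : ∀ f ∈ H α₀, ∀ g ∈ H α₀, g ∘ f ∈ H α₀)
    (hidK : id ∈ K) (hKclosed : ∀ f ∈ K, ∀ g ∈ K, g ∘ f ∈ K) (hK : ∀ β ≠ α₀, H β ⊆ K)
    (hcomm : ∀ β ≠ α₀, ∀ g ∈ H β, ∀ h ∈ H α₀, g ∘ h = h ∘ g)
    {l : List (X → X)} (hl : ∀ g ∈ l, ∃ β, g ∈ H β) :
    ∃ h ∈ H α₀, ∃ k ∈ K, l.foldl (fun acc g => g ∘ acc) id = h ∘ k := by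
  refine foldl_comp_mem (G := {g | ∃ β, g ∈ H β}) (S := {f | ∃ h ∈ H α₀, ∃ k ∈ K, f = h ∘ k})
    ?_ hl ⟨id, hid, id, hidK, rfl⟩
  rintro g ⟨β, hg⟩ _ ⟨h, hh, k, hk, rfl⟩
  by_cases hβ : β = α₀
  · subst hβ
    exact ⟨g ∘ h, hclosed h hh g hg, k, hk, rfl⟩
  · refine ⟨h, hh, g ∘ k, hKclosed k hk g (hK β hβ hg), ?_⟩
    rw [← Function.comp_assoc, hcomm β hβ g hg h hh, Function.comp_assoc]

end

@[simp] lemma rotMap_apply (a : ℝ) (z : Circle) : rotMap a z = Circle.exp a * z := rfl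

@[simp] lemma reflMap_apply (a : ℝ) (z : Circle) : reflMap a z = Circle.exp a * z⁻¹ := rfl

lemma rotMap_zero : rotMap 0 = id := by
  funext z; simp

lemma rotMap_comp_rotMap (a b : ℝ) : rotMap a ∘ rotMap b = rotMap (a + b) := by
  funext z; simp [Circle.exp_add, mul_assoc]

lemma rotMap_comp_reflMap (a b : ℝ) : rotMap a ∘ reflMap b = reflMap (a + b) := by
  funext z; simp [Circle.exp_add, mul_assoc]

lemma reflMap_comp_rotMap (a b : ℝ) : reflMap a ∘ rotMap b = reflMap (a - b) := by
  funext z; simp [sub_eq_add_neg, Circle.exp_add, Circle.exp_neg]; ac_rfl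

lemma reflMap_comp_reflMap (a b : ℝ) : reflMap a ∘ reflMap b = rotMap (a - b) := by
  funext z; simp [sub_eq_add_neg, Circle.exp_add, Circle.exp_neg]; ac_rfl

lemma Circle.exp_pi_div_two_ne_inv : Circle.exp (π / 2) ≠ (Circle.exp (π / 2))⁻¹ := by
  intro h
  have hI := congrArg ((↑) : Circle → ℂ) h
  rw [Circle.coe_inv_eq_conj, Circle.coe_exp] at hI
  push_cast at hI
  rw [Complex.exp_pi_div_two_mul_I, Complex.conj_I] at hI
  exact Complex.I_ne_zero (CharZero.eq_neg_self_iff.mp hI)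

instance : Infinite Circle :=
  haveI := nontrivial_of_ne _ _ Circle.exp_pi_div_two_ne_inv
  PreconnectedSpace.infinite

lemma rotMap_ne_reflMap (a b : ℝ) : rotMap a ≠ reflMap b := by
  intro h
  have hexp : Circle.exp a = Circle.exp b := by simpa using congrFun h 1
  have hw := congrFun h (Circle.exp (π / 2))
  rw [rotMap_apply, reflMap_apply, hexp] at hw
  exact Circle.exp_pi_div_two_ne_inv (mul_left_cancel hw)

def rotReflMaps : Set (Circle → Circle) := Set.range rotMap ∪ Set.range reflMap

lemma sigmaStar_subset_rotReflMaps : SigmaStar ⊆ rotReflMaps := by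
  rintro f (⟨q, rfl⟩ | ⟨q, rfl⟩)
  exacts [Or.inl ⟨_, rfl⟩, Or.inr ⟨_, rfl⟩]

lemma comp_mem_rotReflMaps {f g : Circle → Circle} (hf : f ∈ rotReflMaps)
    (hg : g ∈ rotReflMaps) : g ∘ f ∈ rotReflMaps := by
  rcases hf with ⟨a, rfl⟩ | ⟨a, rfl⟩ <;> rcases hg with ⟨b, rfl⟩ | ⟨b, rfl⟩
  · exact Or.inl ⟨_, (rotMap_comp_rotMap b a).symm⟩
  · exact Or.inr ⟨_, (reflMap_comp_rotMap b a).symm⟩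
  · exact Or.inr ⟨_, (rotMap_comp_reflMap b a).symm⟩
  · exact Or.inl ⟨_, (reflMap_comp_reflMap b a).symm⟩

lemma comp_self_eq_id_of_comp_reflMap_comm {f : Circle → Circle} (hf : f ∈ rotReflMaps)
    {c : ℝ} (hc : f ∘ reflMap c = reflMap c ∘ f) : f ∘ f = id := by
  rcases hf with ⟨a, rfl⟩ | ⟨a, rfl⟩
  · rw [rotMap_comp_reflMap, reflMap_comp_rotMap] at hc
    have hexp : Circle.exp a * Circle.exp c = Circle.exp c * (Circle.exp a)⁻¹ := by
      simpa [Circle.exp_add, Circle.exp_sub, div_eq_mul_inv] using congrFun hc 1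
    have haa : Circle.exp a * Circle.exp a = 1 := by
      rw [mul_comm] at hexp
      simpa using congrArg (· * Circle.exp a) (mul_left_cancel hexp)
    funext z
    simp [← mul_assoc, haa]
  · rw [reflMap_comp_reflMap, sub_self, rotMap_zero]

lemma exists_sigmaStar_comp_self_eq (q : ℚ) : ∃ f ∈ SigmaStar, f ∘ f = rotMap (2 * π * q) :=
  ⟨rotMap (2 * π * (q / 2 : ℚ)), Or.inl ⟨q / 2, rfl⟩, by
    rw [rotMap_comp_rotMap]; push_cast; ring_nf⟩

lemma denseRange_rotMap_rat (z : Circle) : DenseRange fun q : ℚ => rotMap (2 * π * q) z := by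
  have hsurj : Function.Surjective fun t : ℝ => rotMap (2 * π * t) z := fun w => by
    obtain ⟨s, hs⟩ := Circle.exp_surjective (w * z⁻¹)
    refine ⟨s / (2 * π), ?_⟩
    simp [mul_div_cancel₀ s (by positivity : (2 * π : ℝ) ≠ 0), hs]
  exact hsurj.denseRange.comp Rat.denseRange_cast (by simp only [rotMap_apply]; fun_prop)

lemma Dense.infinite_of_circOrbit {z : Circle} {A : Set (Circle → Circle)}
    (h : Dense (circOrbit z A)) : A.Infinite := by
  intro hA
  have horbit : circOrbit z A = (fun f => f z) '' A := by
    ext w; simp [circOrbit, eq_comm]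
  have hclosed : IsClosed (circOrbit z A) := horbit ▸ (hA.image _).isClosed
  have huniv : circOrbit z A = Set.univ := hclosed.closure_eq ▸ h.closure_eq
  exact Set.infinite_univ (huniv ▸ horbit ▸ hA.image _)

section
variable {Γ : Type*} {H : Γ → Set (Circle → Circle)}

lemma exists_reflMap_mem (hsub : ∀ β, H β ⊆ SigmaStar) {l : List (Circle → Circle)}
    (hl : ∀ g ∈ l, ∃ β, g ∈ H β) {c : ℝ} (hc : reflMap c = l.foldl (fun acc g => g ∘ acc) id) :
    ∃ β d, reflMap d ∈ H β := by
  by_contra! hno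
  have hrot : l.foldl (fun acc g => g ∘ acc) id ∈ Set.range rotMap := by
    refine foldl_comp_mem (G := Set.range rotMap) ?_ (fun g hg => ?_) ⟨0, rotMap_zero⟩
    · rintro _ ⟨a, rfl⟩ _ ⟨b, rfl⟩
      exact ⟨a + b, (rotMap_comp_rotMap a b).symm⟩
    · obtain ⟨β, hβ⟩ := hl g hg
      rcases hsub β hβ with ⟨q, rfl⟩ | ⟨q, rfl⟩
      exacts [⟨_, rfl⟩, absurd hβ (hno β _)]
  obtain ⟨a, ha⟩ := hrot
  exact rotMap_ne_reflMap a c (ha.trans hc.symm)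

lemma comp_self_mem_of_reflMap_mem {α₀ : Γ} (hsub : ∀ β, H β ⊆ SigmaStar) (hid : id ∈ H α₀)
    (hclosed : ∀ f ∈ H α₀, ∀ g ∈ H α₀, g ∘ f ∈ H α₀) {c : ℝ} (hc : reflMap c ∈ H α₀)
    (hcomm : ∀ β ≠ α₀, ∀ g ∈ H β, ∀ h ∈ H α₀, g ∘ h = h ∘ g)
    {l : List (Circle → Circle)} (hl : ∀ g ∈ l, ∃ β, g ∈ H β) {f : Circle → Circle}
    (hf : f = l.foldl (fun acc g => g ∘ acc) id) : f ∘ f ∈ H α₀ := by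
  set K := {k | k ∈ rotReflMaps ∧ ∀ h ∈ H α₀, k ∘ h = h ∘ k}
  have hKclosed : ∀ f ∈ K, ∀ g ∈ K, g ∘ f ∈ K := by
    rintro f ⟨hfR, hfH⟩ g ⟨hgR, hgH⟩
    refine ⟨comp_mem_rotReflMaps hfR hgR, fun h hh => ?_⟩
    rw [Function.comp_assoc, hfH h hh, ← Function.comp_assoc, hgH h hh, Function.comp_assoc]
  have hK : ∀ β ≠ α₀, H β ⊆ K := fun β hβ g hg =>
    ⟨sigmaStar_subset_rotReflMaps (hsub β hg), hcomm β hβ g hg⟩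
  have hidK : id ∈ K := ⟨Or.inl ⟨0, rotMap_zero⟩, fun _ _ => rfl⟩
  obtain ⟨h, hh, k, ⟨hkR, hkH⟩, rfl⟩ :=
    hf ▸ exists_foldl_eq_comp hid hclosed hidK hKclosed hK hcomm hl
  have hkk : k ∘ k = id := comp_self_eq_id_of_comp_reflMap_comm hkR (hkH _ hc)
  have hsq : (h ∘ k) ∘ (h ∘ k) = h ∘ h :=
    calc (h ∘ k) ∘ (h ∘ k) = h ∘ (k ∘ h) ∘ k := rfl
      _ = (h ∘ h) ∘ (k ∘ k) := by rw [hkH h hh]; rfl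
      _ = h ∘ h := by rw [hkk]; rfl
  exact hsq ▸ hclosed h hh h hh

end

/-- `(𝕊¹,Σ*)` is not co-decomposable to non-point-transitive
(equivalently, non-minimal) transformation semigroups: for every family `(H_α)` of
subsemigroups of `Σ*`, each containing the identity, whose union generates `Σ*` and which
satisfies the multi condition, some `H_α` is infinite and acts minimally on `𝕊¹`. -/
theorem stmt18 {Γ : Type*} (Hsub : Γ → Set (Circle → Circle))
    (hsub : ∀ α, Hsub α ⊆ SigmaStar)
    (hid : ∀ α, id ∈ Hsub α)
    (hclosed : ∀ α, ∀ f ∈ Hsub α, ∀ g ∈ Hsub α, g ∘ f ∈ Hsub α)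
    (hgen : ∀ f ∈ SigmaStar, ∃ l : List (Circle → Circle), l ≠ [] ∧
      (∀ g ∈ l, ∃ α, g ∈ Hsub α) ∧ f = l.foldl (fun acc g => g ∘ acc) id)
    (hmulti : ∀ l l' : List (Γ × (Circle → Circle)), (l.map Prod.fst).Nodup →
      (∀ p ∈ l, p.2 ∈ Hsub p.1) → l.Perm l' → ∀ z : Circle,
      (l.map Prod.snd).foldl (fun w f => f w) z = (l'.map Prod.snd).foldl (fun w f => f w) z) :
    ∃ α, (Hsub α).Infinite ∧ ∀ z : Circle, Dense (circOrbit z (Hsub α)) := by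
  obtain ⟨l₀, -, hl₀, hrefl⟩ := hgen (reflMap (2 * π * (0 : ℚ))) (Or.inr ⟨0, rfl⟩)
  obtain ⟨α₀, c, hc⟩ := exists_reflMap_mem hsub hl₀ hrefl
  have hsq : ∀ f ∈ SigmaStar, f ∘ f ∈ Hsub α₀ := fun f hf => by
    obtain ⟨l, -, hl, hfl⟩ := hgen f hf
    exact comp_self_mem_of_reflMap_mem hsub (hid α₀) (hclosed α₀) hc
      (fun β hβ g hg h hh => comp_comm_of_multi hmulti hβ hg hh) hl hfl
  have hdense : ∀ z, Dense (circOrbit z (Hsub α₀)) := fun z =>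
    (denseRange_rotMap_rat z).mono <| by
      rintro _ ⟨q, rfl⟩
      obtain ⟨f, hf, hff⟩ := exists_sigmaStar_comp_self_eq q
      exact ⟨_, hff ▸ hsq f hf, rfl⟩
  exact ⟨α₀, (hdense 1).infinite_of_circOrbit, hdense⟩
end
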